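/- Let H be a weak bialgebra. Then H_t is a separable Frobenius k-algebra: e_t = ε_t(1_{(1)}) ⊗ 1_{(2)} is a separability idempotent for H_t, and (e_t, ε|_{H_t}) is a Frobenius system. In particular zε_t(1_{(1)}) ⊗ 1_{(2)} = ε_t(1_{(1)}) ⊗ 1_{(2)}z for all z ∈ H_t. -/

import Mathlib

open TensorProduct

structure WeakBialgebra (k H : Type*) [CommRing k] [Ring H] [Algebra k H] where
  comul : H →ₗ[k] H ⊗[k] H
  counit : H →ₗ[k] k
  coassoc : ∀ h : H, (TensorProduct.assoc k H H H) ((comul.rTensor H) (comul h)) =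
      (comul.lTensor H) (comul h)
  counit_left : ∀ h : H, (TensorProduct.lid k H) ((counit.rTensor H) (comul h)) = h
  counit_right : ∀ h : H, (TensorProduct.rid k H) ((counit.lTensor H) (comul h)) = h
  comul_mul : ∀ h g : H, comul (h * g) = comul h * comul g
  weak_unit_left : (comul.lTensor H) (comul 1) =
      (Algebra.TensorProduct.map (AlgHom.id k H)
        (Algebra.TensorProduct.includeLeft : H →ₐ[k] H ⊗[k] H)) (comul 1) *
      (Algebra.TensorProduct.includeRight : (H ⊗[k] H) →ₐ[k] H ⊗[k] (H ⊗[k] H)) (comul 1)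
  weak_unit_right : (comul.lTensor H) (comul 1) =
      (Algebra.TensorProduct.includeRight : (H ⊗[k] H) →ₐ[k] H ⊗[k] (H ⊗[k] H)) (comul 1) *
      (Algebra.TensorProduct.map (AlgHom.id k H)
        (Algebra.TensorProduct.includeLeft : H →ₐ[k] H ⊗[k] H)) (comul 1)
  weak_counit₁ : ∀ h g l : H, counit (h * g * l) =
      (LinearMap.mul' k k) ((TensorProduct.map counit counit)
        ((h ⊗ₜ[k] (1 : H)) * comul g * ((1 : H) ⊗ₜ[k] l)))
  weak_counit₂ : ∀ h g l : H, counit (h * g * l) =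
      (LinearMap.mul' k k) ((TensorProduct.map counit counit)
        ((h ⊗ₜ[k] (1 : H)) * (TensorProduct.comm k H H) (comul g) * ((1 : H) ⊗ₜ[k] l)))

namespace WeakBialgebra

variable {k H : Type*} [CommRing k] [Ring H] [Algebra k H] (W : WeakBialgebra k H)

/-- The target map `ε_t(h) = ε(1_{(1)}h)1_{(2)}`. -/
noncomputable def εt : H →ₗ[k] H :=
  (TensorProduct.lid k H).toLinearMap ∘ₗ (W.counit.rTensor H) ∘ₗ
    (LinearMap.mulLeft k (W.comul 1)) ∘ₗ
    (Algebra.TensorProduct.includeLeft : H →ₐ[k] H ⊗[k] H).toLinearMap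

/-- The source map `ε_s(h) = 1_{(1)}ε(h1_{(2)})`. -/
noncomputable def εs : H →ₗ[k] H :=
  (TensorProduct.rid k H).toLinearMap ∘ₗ (W.counit.lTensor H) ∘ₗ
    (LinearMap.mulRight k (W.comul 1)) ∘ₗ
    (Algebra.TensorProduct.includeRight : H →ₐ[k] H ⊗[k] H).toLinearMap

/-- `ε̄_t(h) = ε(h1_{(1)})1_{(2)}`. -/
noncomputable def εt' : H →ₗ[k] H :=
  (TensorProduct.lid k H).toLinearMap ∘ₗ (W.counit.rTensor H) ∘ₗ
    (LinearMap.mulRight k (W.comul 1)) ∘ₗ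
    (Algebra.TensorProduct.includeLeft : H →ₐ[k] H ⊗[k] H).toLinearMap

/-- `ε̄_s(h) = ε(1_{(2)}h)1_{(1)}`. -/
noncomputable def εs' : H →ₗ[k] H :=
  (TensorProduct.rid k H).toLinearMap ∘ₗ (W.counit.lTensor H) ∘ₗ
    (LinearMap.mulLeft k (W.comul 1)) ∘ₗ
    (Algebra.TensorProduct.includeRight : H →ₐ[k] H ⊗[k] H).toLinearMap

end WeakBialgebra

/-- A weak Hopf algebra: a weak bialgebra with an antipode. -/
structure WeakHopf (k H : Type*) [CommRing k] [Ring H] [Algebra k H] where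
  W : WeakBialgebra k H
  S : H →ₗ[k] H
  S_conv_id : ∀ h : H, (LinearMap.mul' k H) ((S.rTensor H) (W.comul h)) = W.εs h
  id_conv_S : ∀ h : H, (LinearMap.mul' k H) ((S.lTensor H) (W.comul h)) = W.εt h
  S_conv_id_conv_S : ∀ h : H, (LinearMap.mul' k H) ((LinearMap.lTensor H (LinearMap.mul' k H))
      ((TensorProduct.map S (TensorProduct.map LinearMap.id S))
        ((W.comul.lTensor H) (W.comul h)))) = S h

/-!
Everything rests on two consequences of the weak unit axiom for `Δ1 = 1₁ ⊗ 1₂`: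
`1₁ ⊗ ε_t(1₂) = Δ1`, and `Δz = (z ⊗ 1)Δ1 = Δ1(z ⊗ 1)` for `z ∈ H_t`. The latter makes `H_t`
a subalgebra fixed by `ε_t`, so `ε_t(z h) = ε_t(z ε_t(h)) = z ε_t(h)`, and then
`(z ⊗ 1)e_t = (ε_t ⊗ id)((z ⊗ 1)Δ1) = (ε_t ⊗ id)(Δ1(z ⊗ 1))`. Commutation thus reduces to
`ε_t(1₁h) ⊗ 1₂ = ε_t(1₁) ⊗ ε_t(1₂h) = ε_t(1₁) ⊗ 1₂ε_t(h)`, where the first equality splits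
`ε(1'₁1₁h) = ε(1'₁1''₁) ε(1''₂1₁h)` by the weak counit axiom and compares the two factorisations
of `Δ²(1)`. The Frobenius identities come from `ε ∘ ε_t = ε` and `ε_t(1) = 1`, and `m(e_t) = 1`
from `Δ1 Δ1 = Δ1`.
-/

namespace Algebra.TensorProduct

variable {R A B : Type*} [CommSemiring R] [Semiring A] [Semiring B] [Algebra R A] [Algebra R B]

lemma rTensor_mulLeft_apply (a : A) (x : A ⊗[R] B) :
    (LinearMap.mulLeft R a).rTensor B x = (a ⊗ₜ 1) * x := by
  induction x using TensorProduct.induction_on with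
  | zero => simp
  | tmul c d => simp
  | add x y hx hy => simp [hx, hy, mul_add]

lemma rTensor_mulRight_apply (a : A) (x : A ⊗[R] B) :
    (LinearMap.mulRight R a).rTensor B x = x * (a ⊗ₜ 1) := by
  induction x using TensorProduct.induction_on with
  | zero => simp
  | tmul c d => simp
  | add x y hx hy => simp [hx, hy, add_mul]

lemma lTensor_mulRight_apply (b : B) (x : A ⊗[R] B) :
    (LinearMap.mulRight R b).lTensor A x = x * (1 ⊗ₜ b) := by
  induction x using TensorProduct.induction_on with
  | zero => simp
  | tmul c d => simp
  | add x y hx hy => simp [hx, hy, add_mul]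

lemma rTensor_mul_one_tmul {C : Type*} [Semiring C] [Algebra R C] (f : A →ₗ[R] C)
    (x : A ⊗[R] B) (b : B) : f.rTensor B (x * (1 ⊗ₜ b)) = f.rTensor B x * (1 ⊗ₜ b) := by
  induction x using TensorProduct.induction_on with
  | zero => simp
  | tmul c d => simp
  | add x y hx hy => simp [hx, hy, add_mul]

end Algebra.TensorProduct

namespace WeakBialgebra

variable {k H : Type*} [CommRing k] [Ring H] [Algebra k H] (W : WeakBialgebra k H)

lemma εt_apply (h : H) :
    W.εt h = TensorProduct.lid k H (W.counit.rTensor H (W.comul 1 * (h ⊗ₜ[k] 1))) := rfl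

lemma comul_one_mul_self : W.comul 1 * W.comul 1 = W.comul 1 := by
  rw [← W.comul_mul, one_mul]

lemma εt_eq_self_of_comul_eq {x : H} (hx : W.comul x = W.comul 1 * (x ⊗ₜ[k] 1)) :
    W.εt x = x := by
  rw [εt_apply, ← hx, W.counit_left]

lemma εt_one : W.εt 1 = 1 :=
  W.εt_eq_self_of_comul_eq (by rw [← Algebra.TensorProduct.one_def, mul_one])

section Sweedler

variable {W} {S : Finset (H × H)}

lemma εt_eq_sum (hS : W.comul 1 = ∑ p ∈ S, p.1 ⊗ₜ[k] p.2) (u : H) :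
    W.εt u = ∑ p ∈ S, W.counit (p.1 * u) • p.2 := by
  simp [εt_apply, hS, Finset.sum_mul]

lemma counit_mul_eq_sum (hS : W.comul 1 = ∑ p ∈ S, p.1 ⊗ₜ[k] p.2) (x y : H) :
    W.counit (x * y) = ∑ p ∈ S, W.counit (x * p.1) * W.counit (p.2 * y) := by
  simpa [hS, Finset.mul_sum, Finset.sum_mul] using W.weak_counit₁ x 1 y

lemma counit_mul_eq_sum_swap (hS : W.comul 1 = ∑ p ∈ S, p.1 ⊗ₜ[k] p.2) (x y : H) :
    W.counit (x * y) = ∑ p ∈ S, W.counit (x * p.2) * W.counit (p.1 * y) := by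
  simpa [hS, Finset.mul_sum, Finset.sum_mul] using W.weak_counit₂ x 1 y

lemma εt_eq_sum_smul_εt (hS : W.comul 1 = ∑ p ∈ S, p.1 ⊗ₜ[k] p.2) (y : H) :
    W.εt y = ∑ p ∈ S, W.counit (p.2 * y) • W.εt p.1 := by
  calc W.εt y = ∑ q ∈ S, ∑ p ∈ S, (W.counit (q.1 * p.1) * W.counit (p.2 * y)) • q.2 := by
        rw [εt_eq_sum hS y]
        exact Finset.sum_congr rfl fun q _ ↦ by rw [counit_mul_eq_sum hS q.1 y, Finset.sum_smul]
    _ = ∑ p ∈ S, W.counit (p.2 * y) • W.εt p.1 := by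
        rw [Finset.sum_comm]
        simp only [εt_eq_sum hS, Finset.smul_sum, smul_smul, mul_comm]

lemma sum_tmul_comul_eq_tmul_one_mul (hS : W.comul 1 = ∑ p ∈ S, p.1 ⊗ₜ[k] p.2) :
    ∑ p ∈ S, p.1 ⊗ₜ[k] W.comul p.2 = ∑ p ∈ S, p.1 ⊗ₜ[k] ((p.2 ⊗ₜ[k] 1) * W.comul 1) := by
  have h := W.weak_unit_left
  simp only [Algebra.TensorProduct.includeRight_apply] at h
  rw [hS] at h ⊢
  simp only [map_sum, LinearMap.lTensor_tmul, Finset.sum_mul, Finset.mul_sum,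
    Algebra.TensorProduct.map_tmul, AlgHom.id_apply, Algebra.TensorProduct.includeLeft_apply,
    Algebra.TensorProduct.tmul_mul_tmul, one_mul, mul_one] at h
  simp [h, Finset.mul_sum, Algebra.TensorProduct.tmul_mul_tmul]

lemma sum_tmul_comul_eq_mul_tmul_one (hS : W.comul 1 = ∑ p ∈ S, p.1 ⊗ₜ[k] p.2) :
    ∑ p ∈ S, p.1 ⊗ₜ[k] W.comul p.2 = ∑ p ∈ S, p.1 ⊗ₜ[k] (W.comul 1 * (p.2 ⊗ₜ[k] 1)) := by
  have h := W.weak_unit_right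
  simp only [Algebra.TensorProduct.includeRight_apply] at h
  rw [hS] at h ⊢
  simp only [map_sum, LinearMap.lTensor_tmul, Finset.sum_mul, Finset.mul_sum,
    Algebra.TensorProduct.map_tmul, AlgHom.id_apply, Algebra.TensorProduct.includeLeft_apply,
    Algebra.TensorProduct.tmul_mul_tmul, one_mul, mul_one] at h
  simp [h, Finset.sum_mul, Algebra.TensorProduct.tmul_mul_tmul]

end Sweedler

lemma counit_mul_εt (x y : H) : W.counit (x * W.εt y) = W.counit (x * y) := by
  obtain ⟨S, hS⟩ := TensorProduct.exists_finset (W.comul 1)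
  simp [εt_eq_sum hS, counit_mul_eq_sum_swap hS x y, Finset.mul_sum, mul_comm]

lemma counit_εt (h : H) : W.counit (W.εt h) = W.counit h := by
  simpa using W.counit_mul_εt 1 h

lemma εt_mul_εt (x y : H) : W.εt (x * W.εt y) = W.εt (x * y) := by
  obtain ⟨S, hS⟩ := TensorProduct.exists_finset (W.comul 1)
  simp only [εt_eq_sum hS (x * W.εt y), εt_eq_sum hS (x * y), ← mul_assoc, counit_mul_εt]

lemma lTensor_εt_comul_one : W.εt.lTensor H (W.comul 1) = W.comul 1 := by
  obtain ⟨S, hS⟩ := TensorProduct.exists_finset (W.comul 1)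
  have h := congrArg (LinearMap.lTensor H ((TensorProduct.lid k H).toLinearMap ∘ₗ
    W.counit.rTensor H)) (sum_tmul_comul_eq_mul_tmul_one hS)
  simp only [map_sum, LinearMap.lTensor_tmul, LinearMap.coe_comp, LinearEquiv.coe_coe,
    Function.comp_apply, W.counit_left] at h
  conv_rhs => rw [hS, h]
  simp [hS, εt_apply]

lemma comul_εt_eq_tmul_one_mul (h : H) :
    W.comul (W.εt h) = (W.εt h ⊗ₜ[k] 1) * W.comul 1 := by
  obtain ⟨S, hS⟩ := TensorProduct.exists_finset (W.comul 1)
  have key := congrArg ((TensorProduct.lid k (H ⊗[k] H)).toLinearMap ∘ₗ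
    LinearMap.rTensor (H ⊗[k] H) (W.counit ∘ₗ LinearMap.mulRight k h)) (sum_tmul_comul_eq_tmul_one_mul hS)
  simp only [map_sum, LinearMap.rTensor_tmul, LinearMap.coe_comp, LinearEquiv.coe_coe,
    Function.comp_apply, LinearMap.mulRight_apply, TensorProduct.lid_tmul] at key
  simp only [εt_eq_sum hS, map_sum, map_smul, key, TensorProduct.sum_tmul, Finset.sum_mul,
    ← TensorProduct.smul_tmul', smul_mul_assoc]

lemma comul_εt_eq_mul_tmul_one (h : H) :
    W.comul (W.εt h) = W.comul 1 * (W.εt h ⊗ₜ[k] 1) := by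
  obtain ⟨S, hS⟩ := TensorProduct.exists_finset (W.comul 1)
  have key := congrArg ((TensorProduct.lid k (H ⊗[k] H)).toLinearMap ∘ₗ
    LinearMap.rTensor (H ⊗[k] H) (W.counit ∘ₗ LinearMap.mulRight k h)) (sum_tmul_comul_eq_mul_tmul_one hS)
  simp only [map_sum, LinearMap.rTensor_tmul, LinearMap.coe_comp, LinearEquiv.coe_coe,
    Function.comp_apply, LinearMap.mulRight_apply, TensorProduct.lid_tmul] at key
  simp only [εt_eq_sum hS, map_sum, map_smul, key, TensorProduct.sum_tmul, Finset.mul_sum,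
    ← TensorProduct.smul_tmul', mul_smul_comm]

lemma comul_εt_mul_εt (h g : H) :
    W.comul (W.εt h * W.εt g) = W.comul 1 * ((W.εt h * W.εt g) ⊗ₜ[k] 1) := by
  calc W.comul (W.εt h * W.εt g)
      = (W.εt h ⊗ₜ[k] 1) * (W.comul 1 * W.comul 1) * (W.εt g ⊗ₜ[k] 1) := by
        rw [W.comul_mul, W.comul_εt_eq_tmul_one_mul, W.comul_εt_eq_mul_tmul_one]
        simp only [mul_assoc]
    _ = W.comul 1 * ((W.εt h * W.εt g) ⊗ₜ[k] 1) := by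
        rw [W.comul_one_mul_self, ← W.comul_εt_eq_tmul_one_mul, W.comul_εt_eq_mul_tmul_one,
          mul_assoc, Algebra.TensorProduct.tmul_mul_tmul, mul_one]

lemma εt_εt (h : H) : W.εt (W.εt h) = W.εt h :=
  W.εt_eq_self_of_comul_eq (W.comul_εt_eq_mul_tmul_one h)

lemma εt_εt_mul (h g : H) : W.εt (W.εt h * g) = W.εt h * W.εt g := by
  rw [← W.εt_mul_εt, W.εt_eq_self_of_comul_eq (W.comul_εt_mul_εt h g)]

lemma lTensor_εt_comp_mulRight_comul_one (h : H) :
    (W.εt ∘ₗ LinearMap.mulRight k h).lTensor H (W.comul 1) =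
      W.comul 1 * ((1 : H) ⊗ₜ[k] W.εt h) := by
  have hεt : W.εt ∘ₗ LinearMap.mulRight k h ∘ₗ W.εt = LinearMap.mulRight k (W.εt h) ∘ₗ W.εt :=
    LinearMap.ext fun g ↦ W.εt_εt_mul g h
  calc (W.εt ∘ₗ LinearMap.mulRight k h).lTensor H (W.comul 1)
      = (W.εt ∘ₗ LinearMap.mulRight k h ∘ₗ W.εt).lTensor H (W.comul 1) := by
        conv_lhs => rw [← W.lTensor_εt_comul_one, ← LinearMap.lTensor_comp_apply]
        rfl
    _ = W.comul 1 * ((1 : H) ⊗ₜ[k] W.εt h) := by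
        rw [hεt, LinearMap.lTensor_comp_apply, W.lTensor_εt_comul_one,
          Algebra.TensorProduct.lTensor_mulRight_apply]

lemma rTensor_εt_comp_mulRight_comul_one (h : H) :
    (W.εt ∘ₗ LinearMap.mulRight k h).rTensor H (W.comul 1) =
      TensorProduct.map W.εt (W.εt ∘ₗ LinearMap.mulRight k h) (W.comul 1) := by
  obtain ⟨S, hS⟩ := TensorProduct.exists_finset (W.comul 1)
  have key := congrArg (TensorProduct.map W.εt ((TensorProduct.lid k H).toLinearMap ∘ₗ
      W.counit.rTensor H ∘ₗ LinearMap.mulRight k (h ⊗ₜ[k] 1)))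
    ((sum_tmul_comul_eq_tmul_one_mul hS).symm.trans (sum_tmul_comul_eq_mul_tmul_one hS))
  rw [hS] at key
  simp only [map_sum, Finset.mul_sum, Finset.sum_mul, Algebra.TensorProduct.tmul_mul_tmul,
    TensorProduct.map_tmul, LinearMap.coe_comp, Function.comp_apply, LinearMap.mulRight_apply,
    LinearMap.rTensor_tmul, LinearEquiv.coe_coe, TensorProduct.lid_tmul, one_mul, mul_one] at key
  calc (W.εt ∘ₗ LinearMap.mulRight k h).rTensor H (W.comul 1)
      = ∑ q ∈ S, W.εt (q.1 * h) ⊗ₜ[k] q.2 := by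
        simp [hS]
    _ = ∑ q ∈ S, ∑ p ∈ S, W.counit (p.2 * q.1 * h) • (W.εt p.1 ⊗ₜ[k] q.2) := by
        refine Finset.sum_congr rfl fun q _ ↦ ?_
        rw [εt_eq_sum_smul_εt hS, TensorProduct.sum_tmul]
        simp only [TensorProduct.smul_tmul', mul_assoc]
    _ = ∑ p ∈ S, W.εt p.1 ⊗ₜ[k] ∑ q ∈ S, W.counit (p.2 * q.1 * h) • q.2 := by
        rw [Finset.sum_comm]
        simp only [TensorProduct.tmul_sum, TensorProduct.tmul_smul]
    _ = ∑ p ∈ S, W.εt p.1 ⊗ₜ[k] ∑ q ∈ S, W.counit (q.1 * p.2 * h) • q.2 := key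
    _ = TensorProduct.map W.εt (W.εt ∘ₗ LinearMap.mulRight k h) (W.comul 1) := by
        simp [hS, εt_eq_sum hS, mul_assoc]

noncomputable def sepIdempotent : H ⊗[k] H := W.εt.rTensor H (W.comul 1)

lemma sepIdempotent_eq_map : W.sepIdempotent = TensorProduct.map W.εt W.εt (W.comul 1) := by
  rw [sepIdempotent, ← LinearMap.rTensor_comp_lTensor, LinearMap.comp_apply,
    W.lTensor_εt_comul_one]

lemma mul'_sepIdempotent : LinearMap.mul' k H W.sepIdempotent = 1 := by
  obtain ⟨S, hS⟩ := TensorProduct.exists_finset (W.comul 1)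
  calc LinearMap.mul' k H W.sepIdempotent
      = TensorProduct.lid k H (W.counit.rTensor H (W.comul 1 * W.comul 1)) := by
        simp only [sepIdempotent, hS, εt_eq_sum hS, map_sum, Finset.sum_mul, Finset.mul_sum,
          Algebra.TensorProduct.tmul_mul_tmul, LinearMap.rTensor_tmul, LinearMap.mul'_apply,
          TensorProduct.lid_tmul, smul_mul_assoc]
    _ = 1 := by rw [W.comul_one_mul_self, W.counit_left]

lemma lid_rTensor_counit_sepIdempotent :
    TensorProduct.lid k H (W.counit.rTensor H W.sepIdempotent) = 1 := by
  have hε : W.counit ∘ₗ W.εt = W.counit := LinearMap.ext W.counit_εt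
  rw [sepIdempotent, ← LinearMap.rTensor_comp_apply, hε, W.counit_left]

lemma rid_lTensor_counit_sepIdempotent :
    TensorProduct.rid k H (W.counit.lTensor H W.sepIdempotent) = 1 := by
  calc TensorProduct.rid k H (W.counit.lTensor H W.sepIdempotent)
      = (TensorProduct.rid k H ∘ₗ TensorProduct.map W.εt W.counit) (W.comul 1) := by
        rw [sepIdempotent, ← LinearMap.lTensor_comp_rTensor]
        rfl
    _ = W.εt (TensorProduct.rid k H (W.counit.lTensor H (W.comul 1))) := by
        rw [CoassocSimps.rid_comp_map]
        rfl
    _ = 1 := by rw [W.counit_right, W.εt_one]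

lemma tmul_one_mul_sepIdempotent {z : H} (hz : z ∈ Set.range W.εt) :
    (z ⊗ₜ[k] 1) * W.sepIdempotent = W.sepIdempotent * (1 ⊗ₜ[k] z) := by
  obtain ⟨h, rfl⟩ := hz
  have hεt : W.εt ∘ₗ LinearMap.mulLeft k (W.εt h) = LinearMap.mulLeft k (W.εt h) ∘ₗ W.εt :=
    LinearMap.ext fun g ↦ W.εt_εt_mul h g
  calc (W.εt h ⊗ₜ[k] 1) * W.sepIdempotent
      = W.εt.rTensor H ((W.εt h ⊗ₜ[k] 1) * W.comul 1) := by
        rw [sepIdempotent, ← Algebra.TensorProduct.rTensor_mulLeft_apply,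
          ← LinearMap.rTensor_comp_apply, ← hεt, LinearMap.rTensor_comp_apply,
          Algebra.TensorProduct.rTensor_mulLeft_apply]
    _ = W.εt.rTensor H (W.comul 1 * (W.εt h ⊗ₜ[k] 1)) := by
        rw [← W.comul_εt_eq_tmul_one_mul, W.comul_εt_eq_mul_tmul_one]
    _ = (W.εt ∘ₗ LinearMap.mulRight k (W.εt h)).rTensor H (W.comul 1) := by
        rw [← Algebra.TensorProduct.rTensor_mulRight_apply, LinearMap.rTensor_comp_apply]
    _ = W.sepIdempotent * (1 ⊗ₜ[k] W.εt h) := by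
        rw [W.rTensor_εt_comp_mulRight_comul_one, ← LinearMap.rTensor_comp_lTensor,
          LinearMap.comp_apply, W.lTensor_εt_comp_mulRight_comul_one, W.εt_εt,
          Algebra.TensorProduct.rTensor_mul_one_tmul, sepIdempotent]

lemma sepIdempotent_mem_range_map_subtype :
    W.sepIdempotent ∈ LinearMap.range
      (TensorProduct.map (LinearMap.range W.εt).subtype (LinearMap.range W.εt).subtype) := by
  refine ⟨TensorProduct.map W.εt.rangeRestrict W.εt.rangeRestrict (W.comul 1), ?_⟩
  rw [← LinearMap.comp_apply, ← TensorProduct.map_comp, LinearMap.subtype_comp_codRestrict,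
    sepIdempotent_eq_map]

end WeakBialgebra

/-- `e_t = ε_t(1₍₁₎) ⊗ 1₍₂₎` is a separability idempotent for `H_t` and,
together with the restriction of the counit, a Frobenius system; in particular
`z ε_t(1₍₁₎) ⊗ 1₍₂₎ = ε_t(1₍₁₎) ⊗ 1₍₂₎ z` for all `z ∈ H_t`. -/
theorem weakBialgebra_target_separable_frobenius
    {k H : Type*} [CommRing k] [Ring H] [Algebra k H] (W : WeakBialgebra k H) :
    (LinearMap.mul' k H) ((LinearMap.rTensor H W.εt) (W.comul 1)) = 1 ∧
    (∀ z ∈ Set.range W.εt,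
      (z ⊗ₜ[k] (1 : H)) * (LinearMap.rTensor H W.εt) (W.comul 1) =
        (LinearMap.rTensor H W.εt) (W.comul 1) * ((1 : H) ⊗ₜ[k] z)) ∧
    (TensorProduct.lid k H) ((W.counit.rTensor H) ((LinearMap.rTensor H W.εt) (W.comul 1))) = 1 ∧
    (TensorProduct.rid k H) ((W.counit.lTensor H) ((LinearMap.rTensor H W.εt) (W.comul 1))) = 1 ∧
    (LinearMap.rTensor H W.εt) (W.comul 1) ∈ LinearMap.range
      (TensorProduct.map (LinearMap.range W.εt).subtype (LinearMap.range W.εt).subtype) :=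
  ⟨W.mul'_sepIdempotent, fun _ ↦ W.tmul_one_mul_sepIdempotent,
    W.lid_rTensor_counit_sepIdempotent, W.rid_lTensor_counit_sepIdempotent,
    W.sepIdempotent_mem_range_map_subtype⟩
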